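/- arXiv:1811.11056 — 2 statements merged into one kernel-verified Lean document; each statement's English description precedes it below -/
import Mathlib

section
/- Let m₁, m₂ be coprime positive integers with α₁/α₂ = m₁/m₂, and set T = 2π·m₁/α₁. Then ∫₀ᵀ √(κ₁(t)² + κ₂(t)² + κ₃(t)²)·‖x′(t)‖ dt ≥ 2√5·π, where κ₁, κ₂, κ₃ are the first three Frenet curvatures of x. -/
open Real intervalIntegral

/-- The curve `x(t) = (a₁ cos(α₁ t), a₁ sin(α₁ t), a₂ cos(α₂ t), a₂ sin(α₂ t))` in `ℝ⁴`. -/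
noncomputable def curveX (a₁ a₂ α₁ α₂ : ℝ) : ℝ → EuclideanSpace ℝ (Fin 4) :=
  fun t => (WithLp.equiv 2 (Fin 4 → ℝ)).symm
    ![a₁ * Real.cos (α₁ * t), a₁ * Real.sin (α₁ * t),
      a₂ * Real.cos (α₂ * t), a₂ * Real.sin (α₂ * t)]

/-- `D_j(t)`: the determinant of the `j × j` Gram matrix whose `(a,b)` entry is the inner
product of the `a`-th and `b`-th derivatives of `y` at `t` (`1 ≤ a, b ≤ j`); `D₀ = 1`. -/
noncomputable def gramDet {n : ℕ} (y : ℝ → EuclideanSpace ℝ (Fin n)) (j : ℕ) (t : ℝ) : ℝ :=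
  Matrix.det (Matrix.of fun a b : Fin j =>
    (inner ℝ (iteratedDeriv (a.val + 1) y t) (iteratedDeriv (b.val + 1) y t) : ℝ))

/-- The `j`-th Frenet curvature `κ_j(t) = √(D_{j+1} D_{j-1}) / (D_j ‖y′(t)‖)` (for `j ≥ 1`). -/
noncomputable def frenetCurvature {n : ℕ} (y : ℝ → EuclideanSpace ℝ (Fin n)) (j : ℕ) (t : ℝ) :
    ℝ :=
  Real.sqrt (gramDet y (j + 1) t * gramDet y (j - 1) t) / (gramDet y j t * ‖deriv y t‖)

/-- The Plücker coordinates `w(t)` of the exterior product of `x′(t)` and `x″(t)`. -/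
noncomputable def oscW (x : ℝ → EuclideanSpace ℝ (Fin 4)) (t : ℝ) : EuclideanSpace ℝ (Fin 6) :=
  (WithLp.equiv 2 (Fin 6 → ℝ)).symm
    ![deriv x t 0 * deriv (deriv x) t 1 - deriv x t 1 * deriv (deriv x) t 0,
      deriv x t 0 * deriv (deriv x) t 2 - deriv x t 2 * deriv (deriv x) t 0,
      deriv x t 0 * deriv (deriv x) t 3 - deriv x t 3 * deriv (deriv x) t 0,
      deriv x t 1 * deriv (deriv x) t 2 - deriv x t 2 * deriv (deriv x) t 1,
      deriv x t 1 * deriv (deriv x) t 3 - deriv x t 3 * deriv (deriv x) t 1,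
      deriv x t 2 * deriv (deriv x) t 3 - deriv x t 3 * deriv (deriv x) t 2]

/-- The osculating indicatrix `x̃(t) = w(t) / ‖w(t)‖`. -/
noncomputable def oscInd (x : ℝ → EuclideanSpace ℝ (Fin 4)) (t : ℝ) :
    EuclideanSpace ℝ (Fin 6) :=
  ‖oscW x t‖⁻¹ • oscW x t

/-!
Every derivative of `x` is a curve of the same kind: `x⁽ⁿ⁾` has amplitudes `aᵢ αᵢⁿ` and its phase
is shifted by `n π / 2`. Hence `⟪x⁽ⁱ⁾, x⁽ʲ⁾⟫ = (a₁² α₁^(i+j) + a₂² α₂^(i+j)) cos ((i - j) π / 2)`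
does not depend on `t`, the Gram determinants are explicit, and
`κ₁² + κ₂² + κ₃² = (α₁² + α₂²) / ‖x′‖²`. The integrand is therefore the constant `√(α₁² + α₂²)`,
and since `m₁ α₂ = m₂ α₁` the integral over one period is `2π √(m₁² + m₂²)`. Finally `m₁ ≠ m₂`
because `α₁ ≠ α₂`, so `m₁² + m₂² ≥ 1 + 4`.
-/

open scoped InnerProductSpace

section Frenet

variable {n : ℕ} (y : ℝ → EuclideanSpace ℝ (Fin n))

theorem gramDet_nonneg (j : ℕ) (t : ℝ) : 0 ≤ gramDet y j t :=
  (Matrix.posSemidef_gram ℝ fun a : Fin j => iteratedDeriv (a + 1) y t).det_nonneg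

theorem gramDet_zero (t : ℝ) : gramDet y 0 t = 1 :=
  Matrix.det_isEmpty

theorem sq_frenetCurvature (j : ℕ) (t : ℝ) :
    frenetCurvature y j t ^ 2 =
      gramDet y (j + 1) t * gramDet y (j - 1) t / (gramDet y j t * ‖deriv y t‖) ^ 2 := by
  rw [frenetCurvature, div_pow, sq_sqrt (mul_nonneg (gramDet_nonneg ..) (gramDet_nonneg ..))]

end Frenet

noncomputable def torusCurve (b₁ b₂ α₁ α₂ φ t : ℝ) : EuclideanSpace ℝ (Fin 4) :=
  !₂[b₁ * cos (α₁ * t + φ), b₁ * sin (α₁ * t + φ), b₂ * cos (α₂ * t + φ), b₂ * sin (α₂ * t + φ)]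

section TorusCurve

variable (b₁ b₂ α₁ α₂ φ : ℝ)

theorem hasDerivAt_torusCurve (t : ℝ) :
    HasDerivAt (torusCurve b₁ b₂ α₁ α₂ φ)
      (torusCurve (b₁ * α₁) (b₂ * α₂) α₁ α₂ (φ + π / 2) t) t := by
  have hcos (b α : ℝ) : HasDerivAt (fun s => b * cos (α * s + φ))
      (b * α * cos (α * t + (φ + π / 2))) t :=
    ((((hasDerivAt_id' t).const_mul α).add_const φ).cos.const_mul b).congr_deriv <| by
      rw [← add_assoc, cos_add_pi_div_two]; ring
  have hsin (b α : ℝ) : HasDerivAt (fun s => b * sin (α * s + φ))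
      (b * α * sin (α * t + (φ + π / 2))) t :=
    ((((hasDerivAt_id' t).const_mul α).add_const φ).sin.const_mul b).congr_deriv <| by
      rw [← add_assoc, sin_add_pi_div_two]; ring
  have hcoords : HasDerivAt (fun s => (![b₁ * cos (α₁ * s + φ), b₁ * sin (α₁ * s + φ),
      b₂ * cos (α₂ * s + φ), b₂ * sin (α₂ * s + φ)] : Fin 4 → ℝ))
      ![b₁ * α₁ * cos (α₁ * t + (φ + π / 2)), b₁ * α₁ * sin (α₁ * t + (φ + π / 2)),
        b₂ * α₂ * cos (α₂ * t + (φ + π / 2)), b₂ * α₂ * sin (α₂ * t + (φ + π / 2))] t := by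
    refine hasDerivAt_pi.2 fun i => ?_
    fin_cases i
    exacts [hcos b₁ α₁, hsin b₁ α₁, hcos b₂ α₂, hsin b₂ α₂]
  exact (PiLp.hasFDerivAt_toLp 2 _).comp_hasDerivAt t hcoords

theorem iteratedDeriv_torusCurve (n : ℕ) :
    iteratedDeriv n (torusCurve b₁ b₂ α₁ α₂ φ) =
      torusCurve (b₁ * α₁ ^ n) (b₂ * α₂ ^ n) α₁ α₂ (φ + n * (π / 2)) := by
  induction n with
  | zero => simp
  | succ n ih =>
    rw [iteratedDeriv_succ, ih]
    funext t
    rw [(hasDerivAt_torusCurve _ _ _ _ _ t).deriv]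
    congr 1 <;> push_cast <;> ring

theorem inner_torusCurve (c₁ c₂ ψ t : ℝ) :
    ⟪torusCurve b₁ b₂ α₁ α₂ φ t, torusCurve c₁ c₂ α₁ α₂ ψ t⟫_ℝ =
      (b₁ * c₁ + b₂ * c₂) * cos (φ - ψ) := by
  have hcos_sub (α : ℝ) :
      cos (α * t + φ) * cos (α * t + ψ) + sin (α * t + φ) * sin (α * t + ψ) = cos (φ - ψ) := by
    rw [← cos_sub]; ring_nf
  simp only [torusCurve, PiLp.inner_apply, Fin.sum_univ_four, RCLike.inner_apply, conj_trivial,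
    Matrix.cons_val_zero, Matrix.cons_val_one, Matrix.cons_val]
  linear_combination (b₁ * c₁) * hcos_sub α₁ + (b₂ * c₂) * hcos_sub α₂

end TorusCurve

section CurveX

variable (a₁ a₂ α₁ α₂ : ℝ)

local notation "x" => curveX a₁ a₂ α₁ α₂
local notation "p₂" => a₁ ^ 2 * α₁ ^ 2 + a₂ ^ 2 * α₂ ^ 2
local notation "p₄" => a₁ ^ 2 * α₁ ^ 4 + a₂ ^ 2 * α₂ ^ 4
local notation "δ" => a₁ * a₂ * α₁ * α₂ * (α₁ ^ 2 - α₂ ^ 2)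

theorem curveX_eq_torusCurve : x = torusCurve a₁ a₂ α₁ α₂ 0 := by
  funext t; simp [curveX, torusCurve]

theorem inner_iteratedDeriv_curveX (i j : ℕ) (t : ℝ) :
    ⟪iteratedDeriv i x t, iteratedDeriv j x t⟫_ℝ =
      (a₁ ^ 2 * α₁ ^ (i + j) + a₂ ^ 2 * α₂ ^ (i + j)) * cos ((i - j : ℝ) * (π / 2)) := by
  rw [curveX_eq_torusCurve, iteratedDeriv_torusCurve, iteratedDeriv_torusCurve, inner_torusCurve]
  congr 1
  · ring
  · congr 1; ring

theorem norm_deriv_curveX (t : ℝ) : ‖deriv x t‖ = √p₂ := by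
  rw [← iteratedDeriv_one, norm_eq_sqrt_real_inner, inner_iteratedDeriv_curveX]
  norm_num

theorem gramDet_curveX (t : ℝ) :
    gramDet x 1 t = p₂ ∧ gramDet x 2 t = p₂ * p₄ ∧
      gramDet x 3 t = p₄ * δ ^ 2 ∧ gramDet x 4 t = α₁ ^ 2 * α₂ ^ 2 * δ ^ 4 := by
  simp only [gramDet, inner_iteratedDeriv_curveX, Matrix.det_succ_row_zero, Fin.sum_univ_succ,
    Matrix.of_apply, Matrix.submatrix_apply]
  refine ⟨?_, ?_, ?_, ?_⟩ <;> simp [Fin.succAbove] <;>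
    norm_num [show (2 : ℝ) * (π / 2) = π by ring,
      show (3 : ℝ) * (π / 2) = π / 2 + π by ring] <;>
    ring

theorem sum_sq_frenetCurvature_curveX (ha₁ : a₁ ≠ 0) (ha₂ : a₂ ≠ 0) (hα₁ : α₁ ≠ 0) (hα₂ : α₂ ≠ 0)
    (hα : α₁ ^ 2 ≠ α₂ ^ 2) (t : ℝ) :
    frenetCurvature x 1 t ^ 2 + frenetCurvature x 2 t ^ 2 + frenetCurvature x 3 t ^ 2 =
      (α₁ ^ 2 + α₂ ^ 2) / p₂ := by
  obtain ⟨hD₁, hD₂, hD₃, hD₄⟩ := gramDet_curveX a₁ a₂ α₁ α₂ t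
  have hp₂ : 0 < p₂ := by positivity
  have hp₄ : 0 < p₄ := by positivity
  have hδ : δ ≠ 0 := by simp [ha₁, ha₂, hα₁, hα₂, sub_ne_zero.2 hα]
  -- κ₁² = p₄ / p₂², κ₂² = δ² / (p₂² p₄), κ₃² = α₁² α₂² / p₄
  simp only [sq_frenetCurvature, Nat.sub_self, gramDet_zero, hD₁, hD₂, hD₃, hD₄,
    norm_deriv_curveX, mul_pow, sq_sqrt hp₂.le]
  field_simp
  ring

theorem sqrt_sum_sq_frenetCurvature_mul_norm_deriv_curveX (ha₁ : a₁ ≠ 0) (ha₂ : a₂ ≠ 0)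
    (hα₁ : α₁ ≠ 0) (hα₂ : α₂ ≠ 0) (hα : α₁ ^ 2 ≠ α₂ ^ 2) (t : ℝ) :
    √(frenetCurvature x 1 t ^ 2 + frenetCurvature x 2 t ^ 2 + frenetCurvature x 3 t ^ 2) *
      ‖deriv x t‖ = √(α₁ ^ 2 + α₂ ^ 2) := by
  have hp₂ : 0 < p₂ := by positivity
  rw [sum_sq_frenetCurvature_curveX a₁ a₂ α₁ α₂ ha₁ ha₂ hα₁ hα₂ hα, norm_deriv_curveX,
    ← sqrt_mul (by positivity), div_mul_cancel₀ _ hp₂.ne']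

end CurveX

theorem five_le_sq_add_sq_of_ne {m₁ m₂ : ℕ} (hm₁ : 0 < m₁) (hm₂ : 0 < m₂) (hne : m₁ ≠ m₂) :
    5 ≤ m₁ ^ 2 + m₂ ^ 2 := by
  rcases Nat.lt_or_gt_of_ne hne with h | h <;> nlinarith

theorem period_mul_sqrt_sq_add_sq {α₁ α₂ m₁ m₂ : ℝ} (hα₁ : 0 < α₁) (hm₁ : 0 ≤ m₁)
    (h : m₁ * α₂ = m₂ * α₁) :
    2 * π * m₁ / α₁ * √(α₁ ^ 2 + α₂ ^ 2) = 2 * π * √(m₁ ^ 2 + m₂ ^ 2) := by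
  have key : m₁ * √(α₁ ^ 2 + α₂ ^ 2) = α₁ * √(m₁ ^ 2 + m₂ ^ 2) :=
    calc m₁ * √(α₁ ^ 2 + α₂ ^ 2) = √(m₁ ^ 2 * (α₁ ^ 2 + α₂ ^ 2)) := by
          rw [sqrt_mul (sq_nonneg _), sqrt_sq hm₁]
      _ = √(α₁ ^ 2 * (m₁ ^ 2 + m₂ ^ 2)) := by
          congr 1; linear_combination (m₁ * α₂ + m₂ * α₁) * h
      _ = α₁ * √(m₁ ^ 2 + m₂ ^ 2) := by rw [sqrt_mul (sq_nonneg _), sqrt_sq hα₁.le]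
  rw [div_mul_eq_mul_div, mul_assoc (2 * π), key, mul_left_comm, mul_div_cancel_left₀ _ hα₁.ne']

theorem stmt0_general (a₁ a₂ α₁ α₂ : ℝ) (ha₁ : 0 < a₁) (ha₂ : 0 < a₂)
    (hα₁ : 0 < α₁) (hα₂ : 0 < α₂) (hne : α₁ ≠ α₂)
    (m₁ m₂ : ℕ) (hm₁ : 0 < m₁) (hm₂ : 0 < m₂)
    (hratio : α₁ / α₂ = (m₁ : ℝ) / (m₂ : ℝ)) (T : ℝ) (hT : T = 2 * Real.pi * m₁ / α₁) :
    (∫ t in (0:ℝ)..T,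
      Real.sqrt (frenetCurvature (curveX a₁ a₂ α₁ α₂) 1 t ^ 2 + frenetCurvature (curveX a₁ a₂ α₁ α₂) 2 t ^ 2
        + frenetCurvature (curveX a₁ a₂ α₁ α₂) 3 t ^ 2) * ‖deriv (curveX a₁ a₂ α₁ α₂) t‖) ≥ 2 * Real.sqrt 5 * Real.pi := by
  have hα : α₁ ^ 2 ≠ α₂ ^ 2 := (pow_left_inj₀ hα₁.le hα₂.le two_ne_zero).not.2 hne
  have hm : (m₁ : ℝ) * α₂ = m₂ * α₁ := by
    rw [div_eq_div_iff hα₂.ne' (by positivity)] at hratio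
    linarith
  have hm_ne : m₁ ≠ m₂ := by
    rintro rfl
    exact hne (mul_left_cancel₀ (by positivity) hm).symm
  have h5 : (5 : ℝ) ≤ m₁ ^ 2 + m₂ ^ 2 := by exact_mod_cast five_le_sq_add_sq_of_ne hm₁ hm₂ hm_ne
  simp_rw [sqrt_sum_sq_frenetCurvature_mul_norm_deriv_curveX a₁ a₂ α₁ α₂ ha₁.ne' ha₂.ne' hα₁.ne'
    hα₂.ne' hα]
  rw [integral_const, smul_eq_mul, sub_zero, hT, period_mul_sqrt_sq_add_sq hα₁ (by positivity) hm,
    ge_iff_le, mul_right_comm]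
  gcongr

theorem stmt0 (a₁ a₂ α₁ α₂ : ℝ) (ha₁ : 0 < a₁) (ha₂ : 0 < a₂)
    (hα₁ : 0 < α₁) (hα₂ : 0 < α₂) (hne : α₁ ≠ α₂)
    (m₁ m₂ : ℕ) (hm₁ : 0 < m₁) (hm₂ : 0 < m₂) (hcop : Nat.Coprime m₁ m₂)
    (hratio : α₁ / α₂ = (m₁ : ℝ) / (m₂ : ℝ)) (T : ℝ) (hT : T = 2 * Real.pi * m₁ / α₁) :
    (∫ t in (0:ℝ)..T,
      Real.sqrt (frenetCurvature (curveX a₁ a₂ α₁ α₂) 1 t ^ 2 + frenetCurvature (curveX a₁ a₂ α₁ α₂) 2 t ^ 2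
        + frenetCurvature (curveX a₁ a₂ α₁ α₂) 3 t ^ 2) * ‖deriv (curveX a₁ a₂ α₁ α₂) t‖) ≥ 2 * Real.sqrt 5 * Real.pi :=
  stmt0_general a₁ a₂ α₁ α₂ ha₁ ha₂ hα₁ hα₂ hne m₁ m₂ hm₁ hm₂ hratio T hT
end

section
/- Let m₁, m₂ be coprime positive integers with α₁/α₂ = m₁/m₂, and set T = 2π·m₁/α₁. Then the osculating indicatrix x̃ is a smooth closed regular curve: x̃ is infinitely differentiable on ℝ, x̃(t + T) = x̃(t) for all t ∈ ℝ, and x̃′(t) ≠ 0 for all t ∈ ℝ. -/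
open Real intervalIntegral

section aux

private lemma hasDerivAt_euclid {n : ℕ} {f : ℝ → EuclideanSpace ℝ (Fin n)}
    {v : EuclideanSpace ℝ (Fin n)} {t : ℝ}
    (h : ∀ i, HasDerivAt (fun s => f s i) (v i) t) : HasDerivAt f v t := by
  have h1 : HasDerivAt (fun s => (fun i => f s i : Fin n → ℝ)) (fun i => v i) t :=
    hasDerivAt_pi.mpr h
  exact (ContinuousLinearEquiv.symm (EuclideanSpace.equiv (Fin n) ℝ)
    : (Fin n → ℝ) ≃L[ℝ] EuclideanSpace ℝ (Fin n)).toContinuousLinearMap.hasFDerivAt.comp_hasDerivAt t h1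

private lemma vec6_val_four {α : Type*} (a b c d e f : α) : ![a,b,c,d,e,f] (4 : Fin 6) = e := rfl
private lemma vec6_val_five {α : Type*} (a b c d e f : α) : ![a,b,c,d,e,f] (5 : Fin 6) = f := rfl

private lemma hd_cos (a α t : ℝ) {c : ℝ} (hc : c = -(a * α)) :
    HasDerivAt (fun s => a * Real.cos (α * s)) (c * Real.sin (α * t)) t := by
  have h := (((hasDerivAt_id t).const_mul α).cos).const_mul a
  simp only [id] at h ; exact h.congr_deriv (by rw [hc] ; ring)

private lemma hd_sin (a α t : ℝ) {c : ℝ} (hc : c = a * α) :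
    HasDerivAt (fun s => a * Real.sin (α * s)) (c * Real.cos (α * t)) t := by
  have h := (((hasDerivAt_id t).const_mul α).sin).const_mul a
  simp only [id] at h ; exact h.congr_deriv (by rw [hc] ; ring)

private lemma hd_sin0 (α t : ℝ) :
    HasDerivAt (fun s => Real.sin (α * s)) (α * Real.cos (α * t)) t := by
  have h := ((hasDerivAt_id t).const_mul α).sin
  simp only [id] at h ; convert h using 1 ; simp [id] ; ring

private lemma hd_cos0 (α t : ℝ) :
    HasDerivAt (fun s => Real.cos (α * s)) (-(α * Real.sin (α * t))) t := by
  have h := ((hasDerivAt_id t).const_mul α).cos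
  simp only [id] at h ; convert h using 1 ; simp [id] ; ring

end aux

section main

private noncomputable def curveD1 (a₁ a₂ α₁ α₂ : ℝ) : ℝ → EuclideanSpace ℝ (Fin 4) :=
  fun t => (WithLp.equiv 2 (Fin 4 → ℝ)).symm
    ![-(a₁ * α₁) * Real.sin (α₁ * t), (a₁ * α₁) * Real.cos (α₁ * t),
      -(a₂ * α₂) * Real.sin (α₂ * t), (a₂ * α₂) * Real.cos (α₂ * t)]

private noncomputable def curveD2 (a₁ a₂ α₁ α₂ : ℝ) : ℝ → EuclideanSpace ℝ (Fin 4) :=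
  fun t => (WithLp.equiv 2 (Fin 4 → ℝ)).symm
    ![-(a₁ * α₁ * α₁) * Real.cos (α₁ * t), -(a₁ * α₁ * α₁) * Real.sin (α₁ * t),
      -(a₂ * α₂ * α₂) * Real.cos (α₂ * t), -(a₂ * α₂ * α₂) * Real.sin (α₂ * t)]

private lemma hasDerivAt_curveX (a₁ a₂ α₁ α₂ t : ℝ) :
    HasDerivAt (curveX a₁ a₂ α₁ α₂) (curveD1 a₁ a₂ α₁ α₂ t) t := by
  apply hasDerivAt_euclid
  intro i
  fin_cases i <;>
    simp only [curveX, curveD1, WithLp.equiv_symm_apply, PiLp.toLp_apply, Matrix.cons_val_zero,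
      Matrix.cons_val_one, Matrix.head_cons, Matrix.cons_val_two, Matrix.tail_cons,
      Matrix.cons_val_three]
  · exact hd_cos a₁ α₁ t rfl
  · exact hd_sin a₁ α₁ t rfl
  · exact hd_cos a₂ α₂ t rfl
  · exact hd_sin a₂ α₂ t rfl

private lemma hasDerivAt_curveD1 (a₁ a₂ α₁ α₂ t : ℝ) :
    HasDerivAt (curveD1 a₁ a₂ α₁ α₂) (curveD2 a₁ a₂ α₁ α₂ t) t := by
  apply hasDerivAt_euclid
  intro i
  fin_cases i <;>
    simp only [curveD1, curveD2, WithLp.equiv_symm_apply, PiLp.toLp_apply, Matrix.cons_val_zero,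
      Matrix.cons_val_one, Matrix.head_cons, Matrix.cons_val_two, Matrix.tail_cons,
      Matrix.cons_val_three]
  · exact hd_sin (-(a₁ * α₁)) α₁ t (by ring)
  · exact hd_cos (a₁ * α₁) α₁ t (by ring)
  · exact hd_sin (-(a₂ * α₂)) α₂ t (by ring)
  · exact hd_cos (a₂ * α₂) α₂ t (by ring)

private lemma deriv_curveX (a₁ a₂ α₁ α₂ : ℝ) :
    deriv (curveX a₁ a₂ α₁ α₂) = curveD1 a₁ a₂ α₁ α₂ :=
  funext fun t => (hasDerivAt_curveX a₁ a₂ α₁ α₂ t).deriv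

private lemma deriv2_curveX (a₁ a₂ α₁ α₂ : ℝ) :
    deriv (deriv (curveX a₁ a₂ α₁ α₂)) = curveD2 a₁ a₂ α₁ α₂ := by
  rw [deriv_curveX]
  exact funext fun t => (hasDerivAt_curveD1 a₁ a₂ α₁ α₂ t).deriv

/-- simplified Plücker vector -/
private noncomputable def oscV (a₁ a₂ α₁ α₂ : ℝ) : ℝ → EuclideanSpace ℝ (Fin 6) :=
  fun t => (WithLp.equiv 2 (Fin 6 → ℝ)).symm
    ![a₁ ^ 2 * α₁ ^ 3,
      a₁ * a₂ * α₁ * α₂ * (α₂ * Real.sin (α₁ * t) * Real.cos (α₂ * t)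
        - α₁ * Real.cos (α₁ * t) * Real.sin (α₂ * t)),
      a₁ * a₂ * α₁ * α₂ * (α₂ * Real.sin (α₁ * t) * Real.sin (α₂ * t)
        + α₁ * Real.cos (α₁ * t) * Real.cos (α₂ * t)),
      -(a₁ * a₂ * α₁ * α₂ * (α₂ * Real.cos (α₁ * t) * Real.cos (α₂ * t)
        + α₁ * Real.sin (α₁ * t) * Real.sin (α₂ * t))),
      a₁ * a₂ * α₁ * α₂ * (α₁ * Real.sin (α₁ * t) * Real.cos (α₂ * t)
        - α₂ * Real.cos (α₁ * t) * Real.sin (α₂ * t)),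
      a₂ ^ 2 * α₂ ^ 3]

private noncomputable def oscV' (a₁ a₂ α₁ α₂ : ℝ) : ℝ → EuclideanSpace ℝ (Fin 6) :=
  fun t => (WithLp.equiv 2 (Fin 6 → ℝ)).symm
    ![0,
      a₁ * a₂ * α₁ * α₂ * ((α₁ ^ 2 - α₂ ^ 2) * (Real.sin (α₁ * t) * Real.sin (α₂ * t))),
      a₁ * a₂ * α₁ * α₂ * ((α₂ ^ 2 - α₁ ^ 2) * (Real.sin (α₁ * t) * Real.cos (α₂ * t))),
      a₁ * a₂ * α₁ * α₂ * ((α₂ ^ 2 - α₁ ^ 2) * (Real.cos (α₁ * t) * Real.sin (α₂ * t))),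
      a₁ * a₂ * α₁ * α₂ * ((α₁ ^ 2 - α₂ ^ 2) * (Real.cos (α₁ * t) * Real.cos (α₂ * t))),
      0]

private lemma oscW_eq (a₁ a₂ α₁ α₂ : ℝ) :
    oscW (curveX a₁ a₂ α₁ α₂) = oscV a₁ a₂ α₁ α₂ := by
  funext t
  unfold oscW oscV
  rw [deriv2_curveX, deriv_curveX]
  simp only [curveD1, curveD2, WithLp.equiv_symm_apply, PiLp.toLp_apply, Matrix.cons_val_zero,
    Matrix.cons_val_one, Matrix.head_cons, Matrix.cons_val_two, Matrix.tail_cons,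
    Matrix.cons_val_three]
  apply congrArg
  simp only [Matrix.vecCons, Fin.cons_inj]
  refine ⟨?_, ?_, ?_, ?_, ?_, ?_, trivial⟩
  · linear_combination (a₁ ^ 2 * α₁ ^ 3) * Real.sin_sq_add_cos_sq (α₁ * t)
  · ring
  · ring
  · ring
  · ring
  · linear_combination (a₂ ^ 2 * α₂ ^ 3) * Real.sin_sq_add_cos_sq (α₂ * t)

private lemma norm_oscV (a₁ a₂ α₁ α₂ t : ℝ) :
    ‖oscV a₁ a₂ α₁ α₂ t‖ = Real.sqrt (a₁ ^ 4 * α₁ ^ 6 + a₂ ^ 4 * α₂ ^ 6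
      + (a₁ * a₂ * α₁ * α₂) ^ 2 * (α₁ ^ 2 + α₂ ^ 2)) := by
  rw [EuclideanSpace.norm_eq]
  congr 1
  rw [Fin.sum_univ_six]
  simp only [oscV, WithLp.equiv_symm_apply, PiLp.toLp_apply, Matrix.cons_val_zero, Matrix.cons_val_one,
    Matrix.head_cons, Matrix.cons_val_two, Matrix.tail_cons, Matrix.cons_val_three,
    vec6_val_four, vec6_val_five, Real.norm_eq_abs, sq_abs]
  linear_combination
    ((a₁ * a₂ * α₁ * α₂) ^ 2 * (α₁ ^ 2 + α₂ ^ 2) * (Real.sin (α₂ * t) ^ 2 + Real.cos (α₂ * t) ^ 2))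
      * Real.sin_sq_add_cos_sq (α₁ * t)
    + ((a₁ * a₂ * α₁ * α₂) ^ 2 * (α₁ ^ 2 + α₂ ^ 2)) * Real.sin_sq_add_cos_sq (α₂ * t)

end main

section rest

private lemma contDiff_trig (α : ℝ) : ContDiff ℝ (⊤ : ℕ∞) (fun t : ℝ => Real.sin (α * t)) ∧
    ContDiff ℝ (⊤ : ℕ∞) (fun t : ℝ => Real.cos (α * t)) :=
  ⟨Real.contDiff_sin.comp (contDiff_const.mul contDiff_id),
   Real.contDiff_cos.comp (contDiff_const.mul contDiff_id)⟩

private lemma contDiff_oscV (a₁ a₂ α₁ α₂ : ℝ) : ContDiff ℝ (⊤ : ℕ∞) (oscV a₁ a₂ α₁ α₂) := by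
  obtain ⟨S1, C1⟩ := contDiff_trig α₁
  obtain ⟨S2, C2⟩ := contDiff_trig α₂
  refine contDiff_euclidean.mpr fun i => ?_
  fin_cases i <;>
    simp only [oscV, WithLp.equiv_symm_apply, PiLp.toLp_apply, Matrix.cons_val_zero, Matrix.cons_val_one,
      Matrix.head_cons, Matrix.cons_val_two, Matrix.tail_cons, Matrix.cons_val_three,
      vec6_val_four, vec6_val_five]
  · exact contDiff_const
  · exact contDiff_const.mul (((contDiff_const.mul S1).mul C2).sub ((contDiff_const.mul C1).mul S2))
  · exact contDiff_const.mul (((contDiff_const.mul S1).mul S2).add ((contDiff_const.mul C1).mul C2))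
  · exact (contDiff_const.mul (((contDiff_const.mul C1).mul C2).add ((contDiff_const.mul S1).mul S2))).neg
  · exact contDiff_const.mul (((contDiff_const.mul S1).mul C2).sub ((contDiff_const.mul C1).mul S2))
  · exact contDiff_const

private lemma hasDerivAt_oscV (a₁ a₂ α₁ α₂ t : ℝ) :
    HasDerivAt (oscV a₁ a₂ α₁ α₂) (oscV' a₁ a₂ α₁ α₂ t) t := by
  have hs1 := hd_sin0 α₁ t
  have hc1 := hd_cos0 α₁ t
  have hs2 := hd_sin0 α₂ t
  have hc2 := hd_cos0 α₂ t
  apply hasDerivAt_euclid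
  intro i
  fin_cases i <;>
    simp only [oscV, oscV', WithLp.equiv_symm_apply, PiLp.toLp_apply, Matrix.cons_val_zero, Matrix.cons_val_one,
      Matrix.head_cons, Matrix.cons_val_two, Matrix.tail_cons, Matrix.cons_val_three,
      vec6_val_four, vec6_val_five]
  · exact hasDerivAt_const t _
  · exact ((((hs1.const_mul α₂).mul hc2).sub ((hc1.const_mul α₁).mul hs2)).const_mul
      (a₁ * a₂ * α₁ * α₂)).congr_deriv (by simp; try ring; try tauto)
  · exact ((((hs1.const_mul α₂).mul hs2).add ((hc1.const_mul α₁).mul hc2)).const_mul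
      (a₁ * a₂ * α₁ * α₂)).congr_deriv (by simp; try ring; try tauto)
  · exact (((((hc1.const_mul α₂).mul hc2).add ((hs1.const_mul α₁).mul hs2)).const_mul
      (a₁ * a₂ * α₁ * α₂)).neg).congr_deriv (by simp; try ring; try tauto)
  · exact ((((hs1.const_mul α₁).mul hc2).sub ((hc1.const_mul α₂).mul hs2)).const_mul
      (a₁ * a₂ * α₁ * α₂)).congr_deriv (by simp; try ring; try tauto)
  · exact hasDerivAt_const t _

end rest

private lemma oscInd_eq (a₁ a₂ α₁ α₂ : ℝ) :
    oscInd (curveX a₁ a₂ α₁ α₂) = fun t =>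
      (Real.sqrt (a₁ ^ 4 * α₁ ^ 6 + a₂ ^ 4 * α₂ ^ 6
        + (a₁ * a₂ * α₁ * α₂) ^ 2 * (α₁ ^ 2 + α₂ ^ 2)))⁻¹ • oscV a₁ a₂ α₁ α₂ t := by
  funext t
  unfold oscInd
  rw [oscW_eq, norm_oscV]

theorem stmt11 (a₁ a₂ α₁ α₂ : ℝ) (ha₁ : 0 < a₁) (ha₂ : 0 < a₂)
    (hα₁ : 0 < α₁) (hα₂ : 0 < α₂) (hne : α₁ ≠ α₂)
    (m₁ m₂ : ℕ) (hm₁ : 0 < m₁) (hm₂ : 0 < m₂) (hcop : Nat.Coprime m₁ m₂)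
    (hratio : α₁ / α₂ = (m₁ : ℝ) / (m₂ : ℝ)) (T : ℝ) (hT : T = 2 * Real.pi * m₁ / α₁) :
    ContDiff ℝ (⊤ : ℕ∞) (oscInd (curveX a₁ a₂ α₁ α₂)) ∧
      (∀ t : ℝ, oscInd (curveX a₁ a₂ α₁ α₂) (t + T) = oscInd (curveX a₁ a₂ α₁ α₂) t) ∧
      ∀ t : ℝ, deriv (oscInd (curveX a₁ a₂ α₁ α₂)) t ≠ 0 := by
  have hα₁' : α₁ ≠ 0 := ne_of_gt hα₁
  have hα₂' : α₂ ≠ 0 := ne_of_gt hα₂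
  have hm₂' : (m₂ : ℝ) ≠ 0 := Nat.cast_ne_zero.mpr hm₂.ne'
  have hRpos : 0 < Real.sqrt (a₁ ^ 4 * α₁ ^ 6 + a₂ ^ 4 * α₂ ^ 6
      + (a₁ * a₂ * α₁ * α₂) ^ 2 * (α₁ ^ 2 + α₂ ^ 2)) := by
    apply Real.sqrt_pos.mpr
    have h1 : 0 < a₁ ^ 4 * α₁ ^ 6 := by positivity
    have h2 : 0 < a₂ ^ 4 * α₂ ^ 6 := by positivity
    have h3 : 0 ≤ (a₁ * a₂ * α₁ * α₂) ^ 2 * (α₁ ^ 2 + α₂ ^ 2) :=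
      mul_nonneg (sq_nonneg _) (by positivity)
    linarith
  have hRinv : (Real.sqrt (a₁ ^ 4 * α₁ ^ 6 + a₂ ^ 4 * α₂ ^ 6
      + (a₁ * a₂ * α₁ * α₂) ^ 2 * (α₁ ^ 2 + α₂ ^ 2)))⁻¹ ≠ 0 := inv_ne_zero (ne_of_gt hRpos)
  refine ⟨?_, ?_, ?_⟩
  · rw [oscInd_eq]
    exact (contDiff_oscV a₁ a₂ α₁ α₂).const_smul _
  · -- periodicity
    have hratio' : α₁ * m₂ = m₁ * α₂ := by
      field_simp at hratio
      linarith
    have hT1 : α₁ * T = (m₁ : ℝ) * (2 * π) := by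
      rw [hT]; field_simp
    have hT2 : α₂ * T = (m₂ : ℝ) * (2 * π) := by
      rw [hT]; field_simp; linear_combination (-1) * hratio'
    intro t
    rw [oscInd_eq]
    simp only
    apply congrArg
    have e1 : α₁ * (t + T) = α₁ * t + (m₁ : ℝ) * (2 * π) := by rw [mul_add, hT1]
    have e2 : α₂ * (t + T) = α₂ * t + (m₂ : ℝ) * (2 * π) := by rw [mul_add, hT2]
    unfold oscV
    apply congrArg
    rw [e1, e2, Real.cos_add_nat_mul_two_pi, Real.sin_add_nat_mul_two_pi,
      Real.cos_add_nat_mul_two_pi, Real.sin_add_nat_mul_two_pi]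
  · -- regularity
    intro t
    rw [oscInd_eq]
    have hd := ((hasDerivAt_oscV a₁ a₂ α₁ α₂ t).const_smul
      ((Real.sqrt (a₁ ^ 4 * α₁ ^ 6 + a₂ ^ 4 * α₂ ^ 6
        + (a₁ * a₂ * α₁ * α₂) ^ 2 * (α₁ ^ 2 + α₂ ^ 2)))⁻¹)).deriv
    erw [hd]
    intro hzero
    have hV : oscV' a₁ a₂ α₁ α₂ t = 0 := by
      rcases smul_eq_zero.mp hzero with h | h
      · exact absurd h hRinv
      · exact h
    have hK : a₁ * a₂ * α₁ * α₂ ≠ 0 := by positivity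
    have hΔ : α₁ ^ 2 - α₂ ^ 2 ≠ 0 := by
      intro h
      have h' : (α₁ - α₂) * (α₁ + α₂) = 0 := by linear_combination h
      rcases mul_eq_zero.mp h' with h'' | h''
      · exact hne (by linarith)
      · linarith
    have hΔ' : α₂ ^ 2 - α₁ ^ 2 ≠ 0 := fun h => hΔ (by linarith)
    have entry : ∀ i : Fin 6, oscV' a₁ a₂ α₁ α₂ t i = 0 := by
      intro i; rw [hV]; rfl
    have h1 := entry 1
    have h2 := entry 2
    have h3 := entry 3
    have h4 := entry 4
    simp only [oscV', WithLp.equiv_symm_apply, PiLp.toLp_apply, Matrix.cons_val_zero, Matrix.cons_val_one,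
      Matrix.head_cons, Matrix.cons_val_two, Matrix.tail_cons, Matrix.cons_val_three,
      vec6_val_four, vec6_val_five] at h1 h2 h3 h4
    have key : ∀ (Δ : ℝ) (u : ℝ), Δ ≠ 0 →
        a₁ * a₂ * α₁ * α₂ * (Δ * u) = 0 → u = 0 := by
      intro Δ u hΔ0 h
      rcases mul_eq_zero.mp h with h | h
      · exact absurd h hK
      · rcases mul_eq_zero.mp h with h | h
        · exact absurd h hΔ0
        · exact h
    have hA := key _ _ hΔ h1
    have hB := key _ _ hΔ' h2
    have hC := key _ _ hΔ' h3
    have hD := key _ _ hΔ h4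
    have hone : (1 : ℝ) = 0 := by
      linear_combination
        (-(Real.sin (α₂ * t) ^ 2 + Real.cos (α₂ * t) ^ 2)) * Real.sin_sq_add_cos_sq (α₁ * t)
        - Real.sin_sq_add_cos_sq (α₂ * t)
        + Real.sin (α₁ * t) * Real.sin (α₂ * t) * hA
        + Real.sin (α₁ * t) * Real.cos (α₂ * t) * hB
        + Real.cos (α₁ * t) * Real.sin (α₂ * t) * hC
        + Real.cos (α₁ * t) * Real.cos (α₂ * t) * hD
    exact one_ne_zero hone
end
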